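/- The Holm step-down procedure controls the familywise error rate at level α: with ordered p-values p_{(1)} ≤ ... ≤ p_{(K)} and step-down thresholds α/(K-j+1) for the j-th smallest p-value, if each true null p-value is superuniform, the probability of rejecting any true null hypothesis is at most α. -/
import Mathlib


open MeasureTheory

/-- Holm step-down procedure controls the familywise error rate at level α.
The Holm procedure (equivalently, closed testing with Bonferroni local tests) rejects
hypothesis `i` at ω iff for every subset `A` containing `i` we have
`min_{j∈A} p_j < α/|A|`; if each true-null p-value is superuniform, the probability of
rejecting any true null hypothesis is at most α. -/
theorem holm_fwer_control {Ω : Type*} [MeasurableSpace Ω]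
    (μ : Measure Ω) [IsProbabilityMeasure μ] (K : ℕ) (hK : 0 < K)
    (p : Fin K → Ω → ℝ) (hmeas : ∀ i, Measurable (p i))
    (hrange : ∀ i ω, p i ω ∈ Set.Icc (0 : ℝ) 1)
    (T : Finset (Fin K)) (hT : T.Nonempty)
    (hsuper : ∀ i ∈ T, ∀ t ∈ Set.Icc (0 : ℝ) 1,
      μ {ω | p i ω ≤ t} ≤ ENNReal.ofReal t)
    (α : ℝ) (hα : α ∈ Set.Icc (0 : ℝ) 1) :
    μ {ω | ∃ i ∈ T, ∀ A : Finset (Fin K), i ∈ A → ∃ j ∈ A, p j ω < α / A.card}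
      ≤ ENNReal.ofReal α := by
  obtain ⟨hα0, hα1⟩ := hα
  set m : ℕ := T.card with hm
  have hm0 : 0 < m := Finset.card_pos.mpr hT
  have hm0' : (0 : ℝ) < m := by exact_mod_cast hm0
  have ht1 : α / m ≤ 1 := by
    rw [div_le_one hm0']
    calc α ≤ 1 := hα1
    _ ≤ m := by exact_mod_cast hm0
  have ht0 : 0 ≤ α / m := div_nonneg hα0 hm0'.le
  -- the event is contained in the union over j ∈ T of {p j < α/m}
  have hsub : {ω | ∃ i ∈ T, ∀ A : Finset (Fin K), i ∈ A → ∃ j ∈ A, p j ω < α / A.card}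
      ⊆ ⋃ j ∈ T, {ω | p j ω ≤ α / m} := by
    intro ω hω
    obtain ⟨i, hi, h⟩ := hω
    obtain ⟨j, hj, hlt⟩ := h T hi
    exact Set.mem_biUnion hj (le_of_lt hlt)
  calc μ _ ≤ μ (⋃ j ∈ T, {ω | p j ω ≤ α / m}) := measure_mono hsub
    _ ≤ ∑ j ∈ T, μ {ω | p j ω ≤ α / m} := measure_biUnion_finset_le T _
    _ ≤ ∑ j ∈ T, ENNReal.ofReal (α / m) := by
        refine Finset.sum_le_sum fun j hj => ?_
        exact hsuper j hj (α / m) ⟨ht0, ht1⟩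
    _ = m * ENNReal.ofReal (α / m) := by rw [Finset.sum_const, nsmul_eq_mul]
    _ = ENNReal.ofReal (m * (α / m)) := by
        rw [ENNReal.ofReal_mul (by positivity)]
        simp [ENNReal.ofReal_natCast]
    _ = ENNReal.ofReal α := by rw [mul_div_cancel₀ _ (ne_of_gt hm0')]
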